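/- Let (X,d) be a metric space. A function f : X → ℝ is ward continuous if and only if the restriction of f to A is uniformly continuous for every subset A of X that is Bourbaki quasi-precompact in X. -/
import Mathlib


open Filter Metric Set

/-- A sequence is quasi-Cauchy if distances of consecutive terms tend to zero. -/
def QuasiCauchy {α : Type*} [MetricSpace α] (u : ℕ → α) : Prop :=
  ∀ ε > (0:ℝ), ∃ n₀ : ℕ, ∀ n ≥ n₀, dist (u (n+1)) (u n) < ε

/-- A function is ward continuous if it preserves quasi-Cauchy sequences. -/
def WardContinuous {α β : Type*} [MetricSpace α] [MetricSpace β] (f : α → β) : Prop :=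
  ∀ u : ℕ → α, QuasiCauchy u → QuasiCauchy (f ∘ u)

/-- `y` lies in the ε-chainable component of `x`: they are joined by an ε-chain. -/
def ChainConn {α : Type*} [MetricSpace α] (ε : ℝ) (x y : α) : Prop :=
  ∃ (n : ℕ) (p : ℕ → α), p 0 = x ∧ p n = y ∧ ∀ i < n, dist (p i) (p (i+1)) < ε

/-- A set `A` is Bourbaki quasi-precompact in the ambient space: for every ε > 0,
`A` is covered by finitely many ε-chainable components. -/
def BourbakiQuasiPrecompactIn {α : Type*} [MetricSpace α] (A : Set α) : Prop :=
  ∀ ε > (0:ℝ), ∃ s : Finset α, ∀ a ∈ A, ∃ p ∈ s, ChainConn ε p a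

section Aux
variable {α : Type*} [MetricSpace α]

lemma chainConn_refl (ε : ℝ) (x : α) : ChainConn ε x x :=
  ⟨0, fun _ => x, rfl, rfl, fun i hi => absurd hi (Nat.not_lt_zero i)⟩

lemma chainConn_symm {ε : ℝ} {x y : α} (h : ChainConn ε x y) : ChainConn ε y x := by
  obtain ⟨n, p, h0, hn, hs⟩ := h
  refine ⟨n, fun i => p (n - i), by simpa using hn, by simpa using h0, ?_⟩
  intro i hi
  show dist (p (n - i)) (p (n - (i+1))) < ε
  have he : n - i = (n - (i+1)) + 1 := by omega
  rw [he, dist_comm]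
  exact hs _ (by omega)

lemma chainConn_trans {ε : ℝ} {x y z : α} (h1 : ChainConn ε x y) (h2 : ChainConn ε y z) :
    ChainConn ε x z := by
  obtain ⟨n, p, hp0, hpn, hps⟩ := h1
  obtain ⟨m, q, hq0, hqm, hqs⟩ := h2
  refine ⟨n + m, fun i => if i ≤ n then p i else q (i - n), by simp [hp0], ?_, ?_⟩
  · by_cases h : m = 0
    · subst h; simpa using hpn.trans (hq0.symm.trans hqm)
    · have hnm : ¬ (n + m ≤ n) := by omega
      have he : n + m - n = m := by omega
      simp [hnm, he, hqm]
  · intro i hi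
    by_cases hin : i + 1 ≤ n
    · simp only [hin, Nat.le_of_succ_le hin, if_pos]
      exact hps i (by omega)
    · by_cases hin' : i ≤ n
      · have hie : i = n := by omega
        subst hie
        have he : i + 1 - i = 1 := by omega
        simp only [hin, if_neg, not_false_iff, le_refl, if_pos, he]
        rw [hpn, ← hq0]
        exact hqs 0 (by omega)
      · have he : i + 1 - n = (i - n) + 1 := by omega
        simp only [hin, hin', if_neg, not_false_iff, he]
        exact hqs (i - n) (by omega)

lemma exists_nested {β : Type*} (P : ℕ → Set β → Prop)
    (h0 : ∃ S, P 0 S)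
    (hstep : ∀ k S, P k S → ∃ T ⊆ S, P (k+1) T) :
    ∃ S : ℕ → Set β, (∀ k, P k (S k)) ∧ ∀ k, S (k+1) ⊆ S k := by
  choose F hF1 hF2 using hstep
  let G : ∀ k : ℕ, {S : Set β // P k S} := fun k =>
    Nat.rec ⟨h0.choose, h0.choose_spec⟩ (fun k ih => ⟨F k ih.1 ih.2, hF2 k ih.1 ih.2⟩) k
  exact ⟨fun k => (G k).1, fun k => (G k).2, fun k => hF1 k (G k).1 (G k).2⟩

lemma exists_mono_in {S : ℕ → Set ℕ} (hS : ∀ k, (S k).Infinite) :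
    ∃ n : ℕ → ℕ, (∀ k, n k ∈ S k) ∧ StrictMono n := by
  choose F hF1 hF2 using fun k (a : ℕ) => (hS k).exists_gt a
  refine ⟨fun k => Nat.rec (F 0 0) (fun k ih => F (k+1) ih) k, ?_, strictMono_nat_of_lt_succ ?_⟩
  · intro k
    cases k with
    | zero => exact hF1 0 0
    | succ k => exact hF1 _ _
  · intro k
    exact hF2 (k+1) _

lemma pigeon {A : Set α} (hA : BourbakiQuasiPrecompactIn A)
    (x : ℕ → α) (hx : ∀ n, x n ∈ A) (S : Set ℕ) (hS : S.Infinite) {ε : ℝ} (hε : 0 < ε) :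
    ∃ T ⊆ S, T.Infinite ∧ ∀ a ∈ T, ∀ b ∈ T, ChainConn ε (x a) (x b) := by
  obtain ⟨s, hs⟩ := hA ε hε
  choose g hg1 hg2 using fun n => hs (x n) (hx n)
  haveI : Infinite S := hS.to_subtype
  obtain ⟨p, hfib⟩ := Finite.exists_infinite_fiber (fun a : S => (⟨g a, hg1 a⟩ : s))
  refine ⟨Subtype.val '' ((fun a : S => (⟨g a, hg1 a⟩ : s)) ⁻¹' {p}), ?_, ?_, ?_⟩
  · rintro _ ⟨⟨a, ha⟩, -, rfl⟩; exact ha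
  · exact (Set.infinite_coe_iff.mp hfib).image (Subtype.val_injective.injOn)
  · rintro _ ⟨⟨a, ha⟩, hap, rfl⟩ _ ⟨⟨b, hb⟩, hbp, rfl⟩
    simp only [Set.mem_preimage, Set.mem_singleton_iff, Subtype.ext_iff] at hap hbp
    have h1 : ChainConn ε (g a) (x a) := hg2 a
    have h2 : ChainConn ε (g b) (x b) := hg2 b
    rw [hap] at h1; rw [hbp] at h2
    exact chainConn_trans (chainConn_symm h1) h2

lemma ward_to_ucOn {f : α → ℝ} (hf : WardContinuous f)
    {A : Set α} (hA : BourbakiQuasiPrecompactIn A) : UniformContinuousOn f A := by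
  rw [Metric.uniformContinuousOn_iff]
  by_contra hcon
  push_neg at hcon
  obtain ⟨ε₀, hε₀, hbad⟩ := hcon
  have hpair : ∀ j : ℕ, ∃ x ∈ A, ∃ y ∈ A,
      dist x y < 1/((j:ℝ)+1) ∧ ε₀ ≤ dist (f x) (f y) := by
    intro j
    obtain ⟨x, hx, y, hy, h1, h2⟩ := hbad (1/((j:ℝ)+1)) (by positivity)
    exact ⟨x, hx, y, hy, h1, h2⟩
  choose x hxA y hyA hxy hfxy using hpair
  -- nested infinite index sets, pairwise chain-connected at scale 1/(k+1)
  obtain ⟨S, hSP, hSsub⟩ := exists_nested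
    (fun k T => T.Infinite ∧ ∀ a ∈ T, ∀ b ∈ T, ChainConn (1/((k:ℝ)+1)) (x a) (x b))
    (by
      obtain ⟨T, -, hT2, hT3⟩ := pigeon hA x hxA Set.univ Set.infinite_univ
        (ε := 1/(((0:ℕ):ℝ)+1)) (by positivity)
      exact ⟨T, hT2, hT3⟩)
    (by
      intro k T hT
      obtain ⟨U, hU1, hU2, hU3⟩ := pigeon hA x hxA T hT.1
        (ε := 1/((((k+1:ℕ)):ℝ)+1)) (by positivity)
      exact ⟨U, hU1, hU2, hU3⟩)
  -- strictly monotone selection n k ∈ S k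
  obtain ⟨n, hnS, hnmono⟩ := exists_mono_in (fun k => (hSP k).1)
  have hnk : ∀ k, k ≤ n k := fun k => hnmono.le_apply
  -- chains between consecutive selected points
  have hconn : ∀ k : ℕ, ChainConn (1/((k:ℝ)+1)) (x (n k)) (x (n (k+1))) := by
    intro k
    exact (hSP k).2 (n k) (hnS k) (n (k+1)) (hSsub k (hnS (k+1)))
  choose L c hc0 hcL hcs using hconn
  -- block data
  set m : ℕ → ℕ := fun k => L k + 2 with hm
  set q : ℕ → ℕ → α := fun k j =>
    if j = 0 then x (n k) else if j = 1 then y (n k) else c k (j - 2) with hq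
  have hq0 : ∀ k, q k 0 = x (n k) := fun k => by simp [hq]
  have hq1 : ∀ k, q k 1 = y (n k) := fun k => by simp [hq]
  have hqm : ∀ k, q k (m k) = q (k+1) 0 := by
    intro k
    have h1 : ¬ (m k = 0) := by simp [hm]
    have h2 : ¬ (m k = 1) := by simp [hm]
    have h3 : m k - 2 = L k := by simp [hm]
    simp only [hq, h1, h2, if_neg, not_false_iff, h3, if_pos]
    exact hcL k
  -- one-step bound inside block k
  have hqstep : ∀ (k j : ℕ), j < m k → dist (q k j) (q k (j+1)) < 1/((k:ℝ)+1) := by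
    intro k j hj
    have hbound : dist (x (n k)) (y (n k)) < 1/((k:ℝ)+1) := by
      refine lt_of_lt_of_le (hxy (n k)) ?_
      apply one_div_le_one_div_of_le (by positivity)
      have h := hnk k
      have : ((k:ℝ)+1) ≤ (n k:ℝ)+1 := by exact_mod_cast Nat.succ_le_succ h
      linarith
    match j with
    | 0 => rw [hq0, hq1]; exact hbound
    | 1 =>
      have : q k 2 = c k 0 := by simp [hq]
      rw [hq1, this, hc0, dist_comm]
      exact hbound
    | (j+2) =>
      have h1 : q k (j+2) = c k j := by simp [hq]
      have h2 : q k (j+3) = c k (j+1) := by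
        have : j + 3 - 2 = j + 1 := by omega
        simp [hq, this]
      rw [h1, h2]
      exact hcs k j (by simp [hm] at hj; omega)
  -- offsets
  set o : ℕ → ℕ := fun k => Nat.rec 0 (fun k ok => ok + m k) k with ho
  have ho0 : o 0 = 0 := rfl
  have hosucc : ∀ k, o (k+1) = o k + m k := fun k => rfl
  have homono : StrictMono o := by
    apply strictMono_nat_of_lt_succ
    intro k
    rw [hosucc]
    simp [hm]
  have hok : ∀ k, k ≤ o k := fun k => homono.le_apply
  have hub : ∀ i : ℕ, ∃ k, i < o (k+1) := by
    intro i
    exact ⟨i, lt_of_lt_of_le (Nat.lt_succ_self i) (hok (i+1))⟩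
  set idx : ℕ → ℕ := fun i => Nat.find (hub i) with hidx
  have hidx1 : ∀ i, i < o (idx i + 1) := fun i => Nat.find_spec (hub i)
  have hidx2 : ∀ i, o (idx i) ≤ i := by
    intro i
    rcases h : idx i with _ | k
    · rw [ho0]; exact Nat.zero_le i
    · have h2 := Nat.find_min (hub i) (m := k) (show k < idx i by omega)
      omega
  have hidx_eq : ∀ i k, o k ≤ i → i < o (k+1) → idx i = k := by
    intro i k h1 h2
    have hle : idx i ≤ k := Nat.find_le h2
    by_contra hne
    have hlt : idx i < k := lt_of_le_of_ne hle hne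
    have : o (idx i + 1) ≤ o k := homono.monotone (show idx i + 1 ≤ k by omega)
    have := hidx1 i
    omega
  set v : ℕ → α := fun i => q (idx i) (i - o (idx i)) with hv
  -- step bound for v
  have hvstep : ∀ i : ℕ, dist (v (i+1)) (v i) < 1/(((idx i):ℝ)+1) := by
    intro i
    set k := idx i with hk
    have hoki : o k ≤ i := hidx2 i
    have hoik : i < o (k+1) := hidx1 i
    have hjm : i - o k < m k := by rw [hosucc] at hoik; omega
    by_cases hcase : i + 1 < o (k+1)
    · have he : idx (i+1) = k := hidx_eq (i+1) k (by omega) hcase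
      have hv1 : v (i+1) = q k (i + 1 - o k) := by rw [hv]; simp only; rw [he]
      have : i + 1 - o k = (i - o k) + 1 := by omega
      rw [hv1, this, hv]
      simp only [← hk]
      rw [dist_comm]
      exact hqstep k (i - o k) hjm
    · have hei : i + 1 = o (k+1) := by omega
      have he : idx (i+1) = k + 1 := by
        apply hidx_eq (i+1) (k+1) (by omega)
        rw [hosucc (k+1)]
        simp only [hm]
        omega
      have hv1 : v (i+1) = q (k+1) 0 := by
        rw [hv]; simp only; rw [he, hei, Nat.sub_self]
      have hjeq : i - o k = m k - 1 := by rw [hosucc] at hei; omega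
      have hmk1 : m k - 1 + 1 = m k := by simp [hm]
      rw [hv1, ← hqm k, hv]
      simp only [← hk]
      rw [hjeq, dist_comm, ← hmk1]
      exact hqstep k (m k - 1) (by omega)
  -- v is quasi-Cauchy
  have hvQC : QuasiCauchy v := by
    intro ε hε
    obtain ⟨K, hK⟩ := exists_nat_one_div_lt hε
    refine ⟨o K, fun i hi => ?_⟩
    have hKidx : K ≤ idx i := by
      by_contra hlt
      have h1 : o (idx i + 1) ≤ o K := homono.monotone (show idx i + 1 ≤ K by omega)
      have h2 := hidx1 i
      omega
    calc dist (v (i+1)) (v i) < 1/(((idx i):ℝ)+1) := hvstep i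
      _ ≤ 1/((K:ℝ)+1) := by
          apply one_div_le_one_div_of_le (by positivity)
          exact_mod_cast Nat.succ_le_succ hKidx
      _ < ε := hK
  -- but f ∘ v is not quasi-Cauchy at scale ε₀
  obtain ⟨n₀, hn₀⟩ := hf v hvQC ε₀ hε₀
  have hio : idx (o n₀) = n₀ := hidx_eq (o n₀) n₀ (le_refl _) (homono (Nat.lt_succ_self n₀))
  have hio1 : idx (o n₀ + 1) = n₀ := by
    apply hidx_eq _ n₀ (by omega)
    rw [hosucc]
    simp [hm]
  have hv0 : v (o n₀) = x (n (n₀)) := by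
    rw [hv]; simp only; rw [hio, Nat.sub_self, hq0]
  have hv1 : v (o n₀ + 1) = y (n (n₀)) := by
    rw [hv]; simp only; rw [hio1]
    have : o n₀ + 1 - o n₀ = 1 := by omega
    rw [this, hq1]
  have := hn₀ (o n₀) (hok n₀)
  rw [Function.comp_apply, Function.comp_apply, hv0, hv1] at this
  have hge : ε₀ ≤ dist (f (y (n n₀))) (f (x (n n₀))) := by
    rw [dist_comm]; exact hfxy (n n₀)
  linarith

end Aux

theorem stmt10 {X : Type*} [MetricSpace X] (f : X → ℝ) :
    WardContinuous f ↔
      ∀ A : Set X, BourbakiQuasiPrecompactIn A → UniformContinuousOn f A := by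
  classical
  constructor
  · intro hf A hA
    exact ward_to_ucOn hf hA
  · intro h u hu
    -- range of a quasi-Cauchy sequence is Bourbaki quasi-precompact
    have hA : BourbakiQuasiPrecompactIn (Set.range u) := by
      intro ε hε
      obtain ⟨n₀, hn₀⟩ := hu ε hε
      refine ⟨Finset.image u (Finset.range (n₀+1)), ?_⟩
      rintro _ ⟨k, rfl⟩
      by_cases hk : k ≤ n₀
      · refine ⟨u k, ?_, chainConn_refl ε (u k)⟩
        exact Finset.mem_image_of_mem u (Finset.mem_range.mpr (by omega))
      · refine ⟨u n₀, ?_, k - n₀, fun i => u (n₀ + i), rfl, by show u (n₀ + (k - n₀)) = u k; congr 1; omega, ?_⟩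
        · exact Finset.mem_image_of_mem u (Finset.mem_range.mpr (by omega))
        intro i hi
        show dist (u (n₀ + i)) (u (n₀ + (i+1))) < ε
        have he : n₀ + (i + 1) = (n₀ + i) + 1 := by omega
        rw [dist_comm, he]
        exact hn₀ (n₀ + i) (by omega)
    have := h (Set.range u) hA
    rw [Metric.uniformContinuousOn_iff] at this
    intro ε hε
    obtain ⟨δ, hδ, hδ'⟩ := this ε hε
    obtain ⟨n₀, hn₀⟩ := hu δ hδ
    exact ⟨n₀, fun n hn => hδ' (u (n+1)) ⟨n+1, rfl⟩ (u n) ⟨n, rfl⟩ (hn₀ n hn)⟩
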